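/- Let φ be a 3-CNF formula with n variables and m clauses and G_φ the digraph from the reduction. Then φ has a satisfying assignment if and only if G_φ has an undominated out-regular induced subgraph. -/

import Mathlib

/-!
If `ξ` satisfies `φ`, fix a true literal `k_j` in each clause and take the rows `y_i` or `ȳ_i`
according to `ξ`, all `z_{i1}`, all `C_j` and the `u_{jk_j}`, together with the columns `x_i` or
`x̄_i`, all `z_{i2}`, the `v_{jk_j}` and `a`: every chosen row has out-weight `1` into `S`, every
chosen column out-weight `m + n`, and no outside vertex exceeds these.

Conversely, `α` and `β` bound the out-weight of every vertex, and both are positive because every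
vertex has an in-arc. So every chosen vertex has a chosen out-neighbour, and following arcs from any
chosen vertex reaches some `y_i` or `ȳ_i`; hence `a` is chosen and `m + n ≤ β`. As the out-weight of
`a` is at most `m + n`, it equals `m + n`: this forces every `C_j` into `S` and forbids choosing both
`y_i` and `ȳ_i` (else `z_{i2}` would have out-weight `2 (m + n)`). Following
`C_j → v_{jk} → u_{jk} → ℓ_{jk}` then shows that `ξ_i := [y_i ∈ S]` satisfies every clause.
-/

open Finset

/-- Row-side vertices of `G_φ`: `y_i`, `ȳ_i`, `z_{i1}`, clause vertices `C_j`
and clause coordinating vertices `u_{jk}`. -/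
inductive RowV (n m : ℕ) where
  | y (i : Fin n)
  | ybar (i : Fin n)
  | z1 (i : Fin n)
  | Cl (j : Fin m)
  | u (j : Fin m) (k : Fin 3)
  deriving DecidableEq, Fintype

/-- Column-side vertices of `G_φ`: `x_i`, `x̄_i`, `z_{i2}`, clause coordinating
vertices `v_{jk}` and the additional vertex `a`. -/
inductive ColV (n m : ℕ) where
  | x (i : Fin n)
  | xbar (i : Fin n)
  | z2 (i : Fin n)
  | v (j : Fin m) (k : Fin 3)
  | a
  deriving DecidableEq, Fintype

/-- The vertex `ℓ_{jk}`: `cl j k = (i, b)` encodes the `k`-th literal of clause `j` as `x_i` if `b`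
and as `x̄_i` otherwise. -/
def lit {n m : ℕ} (cl : Fin m → Fin 3 → Fin n × Bool) (j : Fin m) (k : Fin 3) :
    ColV n m :=
  if (cl j k).2 then ColV.x (cl j k).1 else ColV.xbar (cl j k).1

/-- Arc weights from the row side to the column side; weight `0` means "no arc". -/
def wR {n m : ℕ} (cl : Fin m → Fin 3 → Fin n × Bool) :
    RowV n m → ColV n m → ℝ
  | RowV.y _, ColV.a => 1
  | RowV.ybar _, ColV.a => 1
  | RowV.z1 i, ColV.z2 i' => if i = i' then 1 else 0
  | RowV.Cl j, ColV.v j' _ => if j = j' then 1 else 0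
  | RowV.u j k, c => if c = lit cl j k then 1 else 0
  | _, _ => 0

/-- Arc weights from the column side to the row side; weight `0` means "no arc". -/
def wC {n m : ℕ} : ColV n m → RowV n m → ℝ
  | ColV.x i, RowV.y i' => if i = i' then (m + n : ℝ) else 0
  | ColV.xbar i, RowV.ybar i' => if i = i' then (m + n : ℝ) else 0
  | ColV.z2 i, RowV.y i' => if i = i' then (m + n : ℝ) else 0
  | ColV.z2 i, RowV.ybar i' => if i = i' then (m + n : ℝ) else 0
  | ColV.v j k, RowV.u j' k' => if j = j' ∧ k = k' then (m + n : ℝ) else 0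
  | ColV.a, RowV.Cl _ => 1
  | ColV.a, RowV.z1 _ => 1
  | _, _ => 0

def Satisfies {n m : ℕ} (cl : Fin m → Fin 3 → Fin n × Bool)
    (ξ : Fin n → Bool) : Prop :=
  ∀ j : Fin m, ∃ k : Fin 3, ξ (cl j k).1 = (cl j k).2

/-- `SR ∪ SC` induces an undominated `(α, β)` out-regular subgraph. -/
structure IsUndominatedOutRegular {R C : Type*} (wR : R → C → ℝ) (wC : C → R → ℝ) (α β : ℝ)
    (SR : Finset R) (SC : Finset C) : Prop where
  rows_nonempty : SR.Nonempty
  cols_nonempty : SC.Nonempty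
  row_eq : ∀ r ∈ SR, ∑ c ∈ SC, wR r c = α
  col_eq : ∀ c ∈ SC, ∑ r ∈ SR, wC c r = β
  row_le_of_notMem : ∀ r ∉ SR, ∑ c ∈ SC, wR r c ≤ α
  col_le_of_notMem : ∀ c ∉ SC, ∑ r ∈ SR, wC c r ≤ β

theorem isUndominatedOutRegular_iff {R C : Type*} {wR : R → C → ℝ} {wC : C → R → ℝ} {α β : ℝ}
    {SR : Finset R} {SC : Finset C} :
    IsUndominatedOutRegular wR wC α β SR SC ↔
      SR.Nonempty ∧ SC.Nonempty ∧ (∀ r ∈ SR, ∑ c ∈ SC, wR r c = α) ∧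
        (∀ c ∈ SC, ∑ r ∈ SR, wC c r = β) ∧ (∀ r ∉ SR, ∑ c ∈ SC, wR r c ≤ α) ∧
        (∀ c ∉ SC, ∑ r ∈ SR, wC c r ≤ β) :=
  ⟨fun ⟨h₁, h₂, h₃, h₄, h₅, h₆⟩ => ⟨h₁, h₂, h₃, h₄, h₅, h₆⟩,
    fun ⟨h₁, h₂, h₃, h₄, h₅, h₆⟩ => ⟨h₁, h₂, h₃, h₄, h₅, h₆⟩⟩

namespace IsUndominatedOutRegular

variable {R C : Type*} {wR : R → C → ℝ} {wC : C → R → ℝ} {α β : ℝ} {SR : Finset R}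
  {SC : Finset C}

theorem row_le (h : IsUndominatedOutRegular wR wC α β SR SC) (r : R) :
    ∑ c ∈ SC, wR r c ≤ α := by
  by_cases hr : r ∈ SR
  · exact (h.row_eq r hr).le
  · exact h.row_le_of_notMem r hr

theorem col_le (h : IsUndominatedOutRegular wR wC α β SR SC) (c : C) :
    ∑ r ∈ SR, wC c r ≤ β := by
  by_cases hc : c ∈ SC
  · exact (h.col_eq c hc).le
  · exact h.col_le_of_notMem c hc

theorem wR_le (h : IsUndominatedOutRegular wR wC α β SR SC) (hw : ∀ r c, 0 ≤ wR r c) (r : R)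
    {c : C} (hc : c ∈ SC) : wR r c ≤ α :=
  (single_le_sum (fun c _ => hw r c) hc).trans (h.row_le r)

theorem wC_le (h : IsUndominatedOutRegular wR wC α β SR SC) (hw : ∀ c r, 0 ≤ wC c r) (c : C)
    {r : R} (hr : r ∈ SR) : wC c r ≤ β :=
  (single_le_sum (fun r _ => hw c r) hr).trans (h.col_le c)

theorem alpha_pos (h : IsUndominatedOutRegular wR wC α β SR SC) (hw : ∀ r c, 0 ≤ wR r c)
    (harc : ∀ c, ∃ r, 0 < wR r c) : 0 < α :=
  have ⟨c, hc⟩ := h.cols_nonempty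
  have ⟨r, hr⟩ := harc c
  hr.trans_le (h.wR_le hw r hc)

theorem beta_pos (h : IsUndominatedOutRegular wR wC α β SR SC) (hw : ∀ c r, 0 ≤ wC c r)
    (harc : ∀ r, ∃ c, 0 < wC c r) : 0 < β :=
  have ⟨r, hr⟩ := h.rows_nonempty
  have ⟨c, hc⟩ := harc r
  hc.trans_le (h.wC_le hw c hr)

end IsUndominatedOutRegular

lemma sum_sum_ite_eq_card {ι κ : Type*} [Fintype κ] [DecidableEq ι] (S : Finset ι) (f : κ → ι) :
    ∑ c ∈ S, ∑ k, (if c = f k then (1 : ℝ) else 0) = #{k | f k ∈ S} := by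
  rw [sum_comm]; simp [sum_ite_eq', sum_boole]

lemma sum_eq_ite_mem {ι M : Type*} [DecidableEq ι] [AddCommMonoid M] {S : Finset ι} {f : ι → M}
    {a : ι} {b : M} (hf : ∀ c, f c = if c = a then b else 0) :
    ∑ c ∈ S, f c = if a ∈ S then b else 0 := by
  simp [hf]

lemma of_ite_eq_of_pos {p : Prop} [Decidable p] {x a : ℝ} (h : (if p then x else 0) = a)
    (ha : 0 < a) : p :=
  (ite_ne_right_iff.1 (h.trans_ne ha.ne')).1

section OutWeights

variable {n m : ℕ} (cl : Fin m → Fin 3 → Fin n × Bool) (SR : Finset (RowV n m))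
  (SC : Finset (ColV n m))

lemma sum_wR_y (i : Fin n) : ∑ c ∈ SC, wR cl (.y i) c = if ColV.a ∈ SC then 1 else 0 :=
  sum_eq_ite_mem fun c => by cases c <;> simp [wR]

lemma sum_wR_ybar (i : Fin n) : ∑ c ∈ SC, wR cl (.ybar i) c = if ColV.a ∈ SC then 1 else 0 :=
  sum_eq_ite_mem fun c => by cases c <;> simp [wR]

lemma sum_wR_z1 (i : Fin n) : ∑ c ∈ SC, wR cl (.z1 i) c = if ColV.z2 i ∈ SC then 1 else 0 :=
  sum_eq_ite_mem fun c => by cases c <;> simp [wR, eq_comm]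

lemma sum_wR_u (j : Fin m) (k : Fin 3) :
    ∑ c ∈ SC, wR cl (.u j k) c = if lit cl j k ∈ SC then 1 else 0 :=
  sum_eq_ite_mem fun c => by cases c <;> rfl

lemma sum_wR_Cl (j : Fin m) : ∑ c ∈ SC, wR cl (.Cl j) c = #{k | ColV.v j k ∈ SC} := by
  rw [← sum_sum_ite_eq_card]
  refine sum_congr rfl fun c _ => ?_
  cases c with
  | v j' k' => by_cases hj : j = j' <;> simp [wR, hj, eq_comm]
  | _ => simp [wR]

lemma sum_wC_x (i : Fin n) : ∑ r ∈ SR, wC (.x i) r = if RowV.y i ∈ SR then (m + n : ℝ) else 0 :=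
  sum_eq_ite_mem fun r => by cases r <;> simp [wC, eq_comm]

lemma sum_wC_xbar (i : Fin n) :
    ∑ r ∈ SR, wC (.xbar i) r = if RowV.ybar i ∈ SR then (m + n : ℝ) else 0 :=
  sum_eq_ite_mem fun r => by cases r <;> simp [wC, eq_comm]

lemma sum_wC_z2 (i : Fin n) : ∑ r ∈ SR, wC (.z2 i) r =
    (if RowV.y i ∈ SR then (m + n : ℝ) else 0) + if RowV.ybar i ∈ SR then (m + n : ℝ) else 0 := by
  simp_rw [← sum_ite_eq' SR _ (fun _ => (m + n : ℝ)), ← sum_add_distrib]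
  exact sum_congr rfl fun r _ => by cases r <;> simp [wC, eq_comm]

lemma sum_wC_v (j : Fin m) (k : Fin 3) :
    ∑ r ∈ SR, wC (.v j k) r = if RowV.u j k ∈ SR then (m + n : ℝ) else 0 :=
  sum_eq_ite_mem fun r => by cases r <;> simp [wC, eq_comm]

lemma sum_wC_a : ∑ r ∈ SR, wC .a r = #{j | RowV.Cl j ∈ SR} + #{i | RowV.z1 i ∈ SR} := by
  rw [← sum_sum_ite_eq_card, ← sum_sum_ite_eq_card, ← sum_add_distrib]
  exact sum_congr rfl fun r _ => by cases r <;> simp [wC]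

lemma wR_nonneg (r : RowV n m) (c : ColV n m) : 0 ≤ wR cl r c := by
  unfold wR; split <;> (try split_ifs) <;> positivity

lemma wC_nonneg (c : ColV n m) (r : RowV n m) : 0 ≤ wC c r := by
  unfold wC; split <;> (try split_ifs) <;> positivity

lemma exists_wR_pos (hn : 1 ≤ n)
    (hlit : ∀ (i : Fin n) (b : Bool), ∃ (j : Fin m) (k : Fin 3), cl j k = (i, b))
    (c : ColV n m) : ∃ r, 0 < wR cl r c := by
  cases c with
  | x i =>
    obtain ⟨j, k, hjk⟩ := hlit i true
    exact ⟨.u j k, by simp [wR, lit, hjk]⟩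
  | xbar i =>
    obtain ⟨j, k, hjk⟩ := hlit i false
    exact ⟨.u j k, by simp [wR, lit, hjk]⟩
  | z2 i => exact ⟨.z1 i, by simp [wR]⟩
  | v j k => exact ⟨.Cl j, by simp [wR]⟩
  | a => exact ⟨.y ⟨0, hn⟩, by simp [wR]⟩

lemma exists_wC_pos (hn : 1 ≤ n) (r : RowV n m) : ∃ c, 0 < wC c r := by
  have hN : (0 : ℝ) < m + n := by norm_cast; omega
  cases r with
  | y i => exact ⟨.x i, by simpa [wC]⟩
  | ybar i => exact ⟨.xbar i, by simpa [wC]⟩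
  | z1 i => exact ⟨.a, by simp [wC]⟩
  | Cl j => exact ⟨.a, by simp [wC]⟩
  | u j k => exact ⟨.v j k, by simpa [wC]⟩

end OutWeights

namespace IsUndominatedOutRegular

variable {n m : ℕ} {cl : Fin m → Fin 3 → Fin n × Bool} {α β : ℝ} {SR : Finset (RowV n m)}
  {SC : Finset (ColV n m)}

theorem a_mem_of_y_mem (h : IsUndominatedOutRegular (wR cl) wC α β SR SC) (hα : 0 < α)
    {i : Fin n} (hi : .y i ∈ SR) : .a ∈ SC :=
  of_ite_eq_of_pos ((sum_wR_y cl SC i).symm.trans (h.row_eq _ hi)) hα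

theorem a_mem_of_ybar_mem (h : IsUndominatedOutRegular (wR cl) wC α β SR SC) (hα : 0 < α)
    {i : Fin n} (hi : .ybar i ∈ SR) : .a ∈ SC :=
  of_ite_eq_of_pos ((sum_wR_ybar cl SC i).symm.trans (h.row_eq _ hi)) hα

theorem z2_mem_of_z1_mem (h : IsUndominatedOutRegular (wR cl) wC α β SR SC) (hα : 0 < α)
    {i : Fin n} (hi : .z1 i ∈ SR) : .z2 i ∈ SC :=
  of_ite_eq_of_pos ((sum_wR_z1 cl SC i).symm.trans (h.row_eq _ hi)) hα

theorem lit_mem_of_u_mem (h : IsUndominatedOutRegular (wR cl) wC α β SR SC) (hα : 0 < α)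
    {j : Fin m} {k : Fin 3} (hjk : .u j k ∈ SR) : lit cl j k ∈ SC :=
  of_ite_eq_of_pos ((sum_wR_u cl SC j k).symm.trans (h.row_eq _ hjk)) hα

theorem exists_v_mem_of_Cl_mem (h : IsUndominatedOutRegular (wR cl) wC α β SR SC)
    (hα : 0 < α) {j : Fin m} (hj : .Cl j ∈ SR) : ∃ k, .v j k ∈ SC := by
  have hpos : (0 : ℝ) < #{k | ColV.v j k ∈ SC} := by rw [← sum_wR_Cl, h.row_eq _ hj]; exact hα
  obtain ⟨k, hk⟩ := card_pos.1 (by exact_mod_cast hpos)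
  exact ⟨k, (mem_filter.1 hk).2⟩

theorem y_mem_of_x_mem (h : IsUndominatedOutRegular (wR cl) wC α β SR SC) (hβ : 0 < β)
    {i : Fin n} (hi : .x i ∈ SC) : .y i ∈ SR :=
  of_ite_eq_of_pos ((sum_wC_x SR i).symm.trans (h.col_eq _ hi)) hβ

theorem ybar_mem_of_xbar_mem (h : IsUndominatedOutRegular (wR cl) wC α β SR SC) (hβ : 0 < β)
    {i : Fin n} (hi : .xbar i ∈ SC) : .ybar i ∈ SR :=
  of_ite_eq_of_pos ((sum_wC_xbar SR i).symm.trans (h.col_eq _ hi)) hβ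

theorem u_mem_of_v_mem (h : IsUndominatedOutRegular (wR cl) wC α β SR SC) (hβ : 0 < β)
    {j : Fin m} {k : Fin 3} (hjk : .v j k ∈ SC) : .u j k ∈ SR :=
  of_ite_eq_of_pos ((sum_wC_v SR j k).symm.trans (h.col_eq _ hjk)) hβ

theorem y_mem_or_ybar_mem_of_z2_mem (h : IsUndominatedOutRegular (wR cl) wC α β SR SC)
    (hβ : 0 < β) {i : Fin n} (hi : .z2 i ∈ SC) : .y i ∈ SR ∨ .ybar i ∈ SR := by
  have hsum := (sum_wC_z2 SR i).symm.trans (h.col_eq _ hi)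
  by_contra! hno
  simp only [hno, if_false, add_zero] at hsum
  linarith

theorem row_mem_of_lit_mem (h : IsUndominatedOutRegular (wR cl) wC α β SR SC) (hβ : 0 < β)
    {j : Fin m} {k : Fin 3} {i : Fin n} {b : Bool} (hjk : cl j k = (i, b))
    (hl : lit cl j k ∈ SC) : (bif b then .y i else .ybar i) ∈ SR := by
  cases b <;> simp only [lit, hjk, cond_true, cond_false, if_true, Bool.false_eq_true,
    if_false] at hl ⊢
  exacts [h.ybar_mem_of_xbar_mem hβ hl, h.y_mem_of_x_mem hβ hl]

theorem exists_y_mem_or_ybar_mem (h : IsUndominatedOutRegular (wR cl) wC α β SR SC)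
    (hα : 0 < α) (hβ : 0 < β) : ∃ i, .y i ∈ SR ∨ .ybar i ∈ SR := by
  have of_lit_mem {j k} (hl : lit cl j k ∈ SC) : ∃ i, .y i ∈ SR ∨ .ybar i ∈ SR := by
    rcases hjk : cl j k with ⟨i, b⟩
    have hrow := h.row_mem_of_lit_mem hβ hjk hl
    cases b
    exacts [⟨i, .inr hrow⟩, ⟨i, .inl hrow⟩]
  obtain ⟨r, hr⟩ := h.rows_nonempty
  cases r with
  | y i => exact ⟨i, .inl hr⟩
  | ybar i => exact ⟨i, .inr hr⟩
  | z1 i => exact ⟨i, h.y_mem_or_ybar_mem_of_z2_mem hβ (h.z2_mem_of_z1_mem hα hr)⟩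
  | Cl j =>
    obtain ⟨k, hk⟩ := h.exists_v_mem_of_Cl_mem hα hr
    exact of_lit_mem (h.lit_mem_of_u_mem hα (h.u_mem_of_v_mem hβ hk))
  | u j k => exact of_lit_mem (h.lit_mem_of_u_mem hα hr)

theorem a_mem (h : IsUndominatedOutRegular (wR cl) wC α β SR SC) (hα : 0 < α) (hβ : 0 < β) :
    .a ∈ SC :=
  have ⟨_, hi⟩ := h.exists_y_mem_or_ybar_mem hα hβ
  hi.elim (h.a_mem_of_y_mem hα) (h.a_mem_of_ybar_mem hα)

theorem le_beta (h : IsUndominatedOutRegular (wR cl) wC α β SR SC) (hα : 0 < α) (hβ : 0 < β) :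
    m + n ≤ β := by
  obtain ⟨i, hi | hi⟩ := h.exists_y_mem_or_ybar_mem hα hβ
  · simpa [wC] using h.wC_le wC_nonneg (.x i) hi
  · simpa [wC] using h.wC_le wC_nonneg (.xbar i) hi

theorem beta_eq (h : IsUndominatedOutRegular (wR cl) wC α β SR SC) (hα : 0 < α) (hβ : 0 < β) :
    β = #{j | RowV.Cl j ∈ SR} + #{i | RowV.z1 i ∈ SR} :=
  (h.col_eq _ (h.a_mem hα hβ)).symm.trans (sum_wC_a SR)

theorem beta_le (h : IsUndominatedOutRegular (wR cl) wC α β SR SC) (hα : 0 < α) (hβ : 0 < β) :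
    β ≤ m + n := by
  have hCl : #{j | RowV.Cl j ∈ SR} ≤ m := (card_filter_le _ _).trans_eq (card_fin m)
  have hz1 : #{i | RowV.z1 i ∈ SR} ≤ n := (card_filter_le _ _).trans_eq (card_fin n)
  rw [h.beta_eq hα hβ]
  exact_mod_cast add_le_add hCl hz1

theorem Cl_mem (h : IsUndominatedOutRegular (wR cl) wC α β SR SC) (hα : 0 < α) (hβ : 0 < β)
    (j : Fin m) : .Cl j ∈ SR := by
  have hCl : #{j | RowV.Cl j ∈ SR} ≤ m := (card_filter_le _ _).trans_eq (card_fin m)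
  have hz1 : #{i | RowV.z1 i ∈ SR} ≤ n := (card_filter_le _ _).trans_eq (card_fin n)
  have hle : m + n ≤ #{j | RowV.Cl j ∈ SR} + #{i | RowV.z1 i ∈ SR} := by
    exact_mod_cast h.beta_eq hα hβ ▸ h.le_beta hα hβ
  have hcard : #{j | RowV.Cl j ∈ SR} = #(univ : Finset (Fin m)) := by rw [card_fin]; omega
  exact card_filter_eq_iff.1 hcard j (mem_univ j)

theorem not_y_mem_and_ybar_mem (h : IsUndominatedOutRegular (wR cl) wC α β SR SC)
    (hα : 0 < α) (hβ : 0 < β) (i : Fin n) : ¬(.y i ∈ SR ∧ .ybar i ∈ SR) := by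
  rintro ⟨hy, hybar⟩
  have hz2 := h.col_le (.z2 i)
  rw [sum_wC_z2, if_pos hy, if_pos hybar] at hz2
  linarith [h.beta_le hα hβ]

theorem satisfies (h : IsUndominatedOutRegular (wR cl) wC α β SR SC) (hα : 0 < α)
    (hβ : 0 < β) : Satisfies cl fun i => decide (.y i ∈ SR) := by
  intro j
  obtain ⟨k, hk⟩ := h.exists_v_mem_of_Cl_mem hα (h.Cl_mem hα hβ j)
  refine ⟨k, ?_⟩
  rcases hjk : cl j k with ⟨i, b⟩
  have hrow := h.row_mem_of_lit_mem hβ hjk (h.lit_mem_of_u_mem hα (h.u_mem_of_v_mem hβ hk))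
  cases b
  · simpa using fun hy => h.not_y_mem_and_ybar_mem hα hβ i ⟨hy, hrow⟩
  · simpa using hrow

end IsUndominatedOutRegular

section Witness

variable {n m : ℕ}

/- The subgraph built from an assignment `ξ` in which literal `kj j` of each clause `j` is true. -/
def witnessRow (ξ : Fin n → Bool) (kj : Fin m → Fin 3) : RowV n m → Bool
  | .y i => ξ i
  | .ybar i => !ξ i
  | .z1 _ => true
  | .Cl _ => true
  | .u j k => k == kj j

def witnessCol (ξ : Fin n → Bool) (kj : Fin m → Fin 3) : ColV n m → Bool
  | .x i => ξ i
  | .xbar i => !ξ i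
  | .z2 _ => true
  | .v j k => k == kj j
  | .a => true

lemma witnessCol_lit {cl : Fin m → Fin 3 → Fin n × Bool} {ξ : Fin n → Bool} (kj : Fin m → Fin 3)
    {j : Fin m} {k : Fin 3} (hk : ξ (cl j k).1 = (cl j k).2) : witnessCol ξ kj (lit cl j k) := by
  rcases hjk : cl j k with ⟨i, b⟩
  rw [hjk] at hk
  cases b <;> simp [lit, hjk, witnessCol, hk]

theorem isUndominatedOutRegular_witness (cl : Fin m → Fin 3 → Fin n × Bool) (hn : 1 ≤ n)
    {ξ : Fin n → Bool} {kj : Fin m → Fin 3} (hkj : ∀ j, ξ (cl j (kj j)).1 = (cl j (kj j)).2) :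
    IsUndominatedOutRegular (wR cl) wC 1 (m + n) {r | witnessRow ξ kj r}
      {c | witnessCol ξ kj c} where
  rows_nonempty := ⟨.z1 ⟨0, hn⟩, by simp only [mem_filter_univ]; rfl⟩
  cols_nonempty := ⟨.a, by simp only [mem_filter_univ]; rfl⟩
  row_eq r hr := by
    cases r <;> simp only [sum_wR_y, sum_wR_ybar, sum_wR_z1, sum_wR_Cl, sum_wR_u,
      mem_filter_univ] at hr ⊢
    case u j k =>
      obtain rfl : k = kj j := by simpa [witnessRow] using hr
      simp [witnessCol_lit kj (hkj j)]
    all_goals simp_all [witnessRow, witnessCol, filter_eq']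
  col_eq c hc := by
    cases c <;> simp only [sum_wC_x, sum_wC_xbar, sum_wC_z2, sum_wC_v, sum_wC_a,
      mem_filter_univ] at hc ⊢
    case z2 i => cases h : ξ i <;> simp [witnessRow, h]
    all_goals simp_all [witnessRow, witnessCol]
  row_le_of_notMem r hr := by
    cases r <;> simp only [sum_wR_y, sum_wR_ybar, sum_wR_u, mem_filter_univ] at hr ⊢ <;>
      simp_all [witnessRow] <;> split_ifs <;> norm_num
  col_le_of_notMem c hc := by
    cases c <;> simp only [sum_wC_x, sum_wC_xbar, sum_wC_v, mem_filter_univ] at hc ⊢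
    case z2 | a => simp [witnessCol] at hc
    all_goals split_ifs <;> first | exact le_rfl | positivity

end Witness

theorem satisfiable_iff_undominated_out_regular_general
    {n m : ℕ} (cl : Fin m → Fin 3 → Fin n × Bool)
    (hn : 1 ≤ n)
    (hlit : ∀ (i : Fin n) (b : Bool), ∃ (j : Fin m) (k : Fin 3), cl j k = (i, b)) :
    (∃ ξ : Fin n → Bool, Satisfies cl ξ) ↔
    (∃ (α β : ℝ) (SR : Finset (RowV n m)) (SC : Finset (ColV n m)),
        SR.Nonempty ∧ SC.Nonempty ∧
        (∀ r ∈ SR, ∑ c ∈ SC, wR cl r c = α) ∧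
        (∀ c ∈ SC, ∑ r ∈ SR, wC c r = β) ∧
        (∀ r ∉ SR, ∑ c ∈ SC, wR cl r c ≤ α) ∧
        (∀ c ∉ SC, ∑ r ∈ SR, wC c r ≤ β)) := by
  simp only [← isUndominatedOutRegular_iff]
  constructor
  · rintro ⟨ξ, hξ⟩
    choose kj hkj using hξ
    exact ⟨_, _, _, _, isUndominatedOutRegular_witness cl hn hkj⟩
  · rintro ⟨α, β, SR, SC, h⟩
    exact ⟨_, h.satisfies (h.alpha_pos (wR_nonneg cl) (exists_wR_pos cl hn hlit))
      (h.beta_pos wC_nonneg (exists_wC_pos hn))⟩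

/-- A 3-CNF formula `φ` (each clause with exactly three
literals, each literal occurring in at least one clause) is satisfiable iff the
digraph `G_φ` from the reduction has an undominated out-regular induced
subgraph. -/
theorem satisfiable_iff_undominated_out_regular
    {n m : ℕ} (cl : Fin m → Fin 3 → Fin n × Bool)
    (hm : 1 ≤ m) (hn : 1 ≤ n)
    (hlit : ∀ (i : Fin n) (b : Bool), ∃ (j : Fin m) (k : Fin 3), cl j k = (i, b)) :
    (∃ ξ : Fin n → Bool, Satisfies cl ξ) ↔
    (∃ (α β : ℝ) (SR : Finset (RowV n m)) (SC : Finset (ColV n m)),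
        SR.Nonempty ∧ SC.Nonempty ∧
        (∀ r ∈ SR, ∑ c ∈ SC, wR cl r c = α) ∧
        (∀ c ∈ SC, ∑ r ∈ SR, wC c r = β) ∧
        (∀ r ∉ SR, ∑ c ∈ SC, wR cl r c ≤ α) ∧
        (∀ c ∉ SC, ∑ r ∈ SR, wC c r ≤ β)) :=
  satisfiable_iff_undominated_out_regular_general cl hn hlit
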